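/- arXiv:2211.03139 — 2 statements merged into one kernel-verified Lean document; each statement's English description precedes it below -/
import Mathlib

section
/- Let R be a commutative ring, C and D R-linear additive categories, and (E, F, G) a triple of adjoint functors with E, G : C → D, F : D → C (so E ⊣ F and F ⊣ G), together with a natural transformation δ : E → G. For z ∈ Z(D), define tr_{E,δ}(z) to be the composite natural transformation id_C → FE → FE → FG → id_C, where the first map is the unit of E ⊣ F, the second is F z E, the third is F δ, and the last is the counit of F ⊣ G. Then tr_{E,δ}(z) lies in the center Z(C), and the resulting map tr_{E,δ} : Z(D) → Z(C) is a homomorphism of R-modules. -/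
open CategoryTheory

/-- Given `R`-linear additive categories `C, D`, an adjoint triple
`(E, F, G)` with `E ⊣ F` and `F ⊣ G`, and a balancing `δ : E ⟶ G`, the assignment
`z ↦ tr_{E,δ}(z)`, where `tr_{E,δ}(z) : id_C → FE → FE → FG → id_C` is obtained from the
unit of `E ⊣ F`, `FzE`, `Fδ` and the counit of `F ⊣ G`, defines an element of the center
`Z(C)` (i.e. an endomorphism of the identity functor), and `tr_{E,δ} : Z(D) → Z(C)` is a
homomorphism of `R`-modules. -/
theorem stmt_2 {R : Type*} [CommRing R] {C D : Type*} [Category C] [Category D]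
    [Preadditive C] [Preadditive D] [Linear R C] [Linear R D]
    (E G : C ⥤ D) (F : D ⥤ C) [F.Additive] [F.Linear R]
    (adj₁ : E ⊣ F) (adj₂ : F ⊣ G) (δ : E ⟶ G) :
    ∃ tr : (𝟭 D ⟶ 𝟭 D) → (𝟭 C ⟶ 𝟭 C),
      (∀ (z : 𝟭 D ⟶ 𝟭 D) (X : C),
        (tr z).app X =
          adj₁.unit.app X ≫ F.map (z.app (E.obj X)) ≫ F.map (δ.app X) ≫ adj₂.counit.app X)
      ∧ (∀ z₁ z₂ : 𝟭 D ⟶ 𝟭 D, tr (z₁ + z₂) = tr z₁ + tr z₂)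
      ∧ (∀ (r : R) (z : 𝟭 D ⟶ 𝟭 D), tr (r • z) = r • tr z) := by
  refine ⟨fun z => ⟨fun X => adj₁.unit.app X ≫ F.map (z.app (E.obj X)) ≫ F.map (δ.app X) ≫
      adj₂.counit.app X, ?_⟩, fun z X => rfl, ?_, ?_⟩
  · intro X Y f
    have h1 := adj₁.unit.naturality f
    have h2 := z.naturality (E.map f)
    have h3 := δ.naturality f
    have h4 := adj₂.counit.naturality f
    simp only [Functor.id_obj, Functor.id_map, Functor.comp_obj, Functor.comp_map] at *
    slice_lhs 1 2 => rw [h1]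
    slice_lhs 2 3 => rw [← F.map_comp, h2, F.map_comp]
    slice_lhs 3 4 => rw [← F.map_comp, h3, F.map_comp]
    slice_lhs 4 5 => rw [h4]
    simp
  · intro z₁ z₂
    ext X
    simp [Preadditive.add_comp, Preadditive.comp_add]
  · intro r z
    ext X
    simp [Linear.smul_comp, Linear.comp_smul, F.map_smul]
end

section
/- Let C and D be k-linear additive categories and let (T, T') be a biadjoint pair of functors T : C → D, T' : D → C (so T ⊣ T' and T' ⊣ T, with fixed units and counits). Suppose there is a natural isomorphism Υ : id_C^{⊕n} ≅ T' T for some n ≥ 1 (i.e. T'T is isomorphic, as a functor, to the n-fold direct sum of the identity functor). Then the composition of the trace maps tr_{T'} ∘ tr_T : Z(C) → Z(C) is Z(C)-linear: for every z ∈ Z(C), tr_{T'}(tr_T(z)) = z · (tr_{T'}(tr_T(1))). -/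
open CategoryTheory CategoryTheory.Limits

/-- Let `(T, T')` be a biadjoint pair between `k`-linear additive categories
with trace maps `tr_T : Z(C) → Z(D)` and `tr_{T'} : Z(D) → Z(C)` (defined via the fixed units
and counits).  If `T' T` is isomorphic, as a functor, to the `n`-fold direct sum of the
identity functor of `C`, then `tr_{T'} ∘ tr_T` is `Z(C)`-linear:
`tr_{T'}(tr_T(z)) = z · tr_{T'}(tr_T(1))` for all `z ∈ Z(C)`. -/
theorem stmt_3 {k : Type*} [Field k] {C D : Type*} [Category C] [Category D]
    [Preadditive C] [Preadditive D] [Linear k C] [Linear k D] [HasFiniteBiproducts C] [HasFiniteBiproducts (C ⥤ C)]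
    (T : C ⥤ D) (T' : D ⥤ C) (adj₁ : T ⊣ T') (adj₂ : T' ⊣ T)
    (n : ℕ) (hn : 1 ≤ n)
    (Υ : (⨁ fun _ : Fin n => 𝟭 C) ≅ T ⋙ T')
    (trT : (𝟭 C ⟶ 𝟭 C) → (𝟭 D ⟶ 𝟭 D))
    (htrT : ∀ (z : 𝟭 C ⟶ 𝟭 C) (Y : D),
      (trT z).app Y = adj₂.unit.app Y ≫ T.map (z.app (T'.obj Y)) ≫ adj₁.counit.app Y)
    (trT' : (𝟭 D ⟶ 𝟭 D) → (𝟭 C ⟶ 𝟭 C))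
    (htrT' : ∀ (z : 𝟭 D ⟶ 𝟭 D) (X : C),
      (trT' z).app X = adj₁.unit.app X ≫ T'.map (z.app (T.obj X)) ≫ adj₂.counit.app X)
    (z : 𝟭 C ⟶ 𝟭 C) :
    trT' (trT z) = z ≫ trT' (trT (𝟙 (𝟭 C))) := by
  -- central elements commute with every morphism
  have hz : ∀ {A B : C} (f : A ⟶ B), f ≫ z.app B = z.app A ≫ f := by
    intro A B f
    simpa using z.naturality f
  have hz' : ∀ {A B Z : C} (f : A ⟶ B) (g : B ⟶ Z),
      f ≫ z.app B ≫ g = z.app A ≫ f ≫ g := by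
    intro A B Z f g
    rw [← Category.assoc, hz, Category.assoc]
  -- key lemma: for the direct sum of identities, z evaluated at H.obj Y equals H.map (z.app Y)
  have hH : ∀ Y : C, z.app ((⨁ fun _ : Fin n => 𝟭 C).obj Y) =
      (⨁ fun _ : Fin n => 𝟭 C).map (z.app Y) := by
    intro Y
    set H := (⨁ fun _ : Fin n => 𝟭 C) with hHdef
    have htot : (∑ j : Fin n, biproduct.π (fun _ : Fin n => 𝟭 C) j ≫
        biproduct.ι (fun _ : Fin n => 𝟭 C) j) = 𝟙 H := biproduct.total
    have h1 : (𝟙 (H.obj Y)) = ∑ j : Fin n,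
        (biproduct.π (fun _ : Fin n => 𝟭 C) j).app Y ≫
          (biproduct.ι (fun _ : Fin n => 𝟭 C) j).app Y := by
      have h := congrArg (fun (α : H ⟶ H) => α.app Y) htot
      simp only [NatTrans.app_sum, NatTrans.comp_app, NatTrans.id_app] at h
      exact h.symm
    calc z.app (H.obj Y) = 𝟙 (H.obj Y) ≫ z.app (H.obj Y) := by simp
      _ = ∑ j : Fin n, (biproduct.π (fun _ : Fin n => 𝟭 C) j).app Y ≫
          ((biproduct.ι (fun _ : Fin n => 𝟭 C) j).app Y ≫ z.app (H.obj Y)) := by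
          rw [h1, Preadditive.sum_comp]; simp [Category.assoc]
      _ = ∑ j : Fin n, (biproduct.π (fun _ : Fin n => 𝟭 C) j).app Y ≫
          (z.app Y ≫ (biproduct.ι (fun _ : Fin n => 𝟭 C) j).app Y) := by
          refine Finset.sum_congr rfl fun j _ => ?_
          congr 1
          simpa using z.naturality ((biproduct.ι (fun _ : Fin n => 𝟭 C) j).app Y)
      _ = ∑ j : Fin n, (biproduct.π (fun _ : Fin n => 𝟭 C) j).app Y ≫
          ((biproduct.ι (fun _ : Fin n => 𝟭 C) j).app Y ≫ H.map (z.app Y)) := by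
          refine Finset.sum_congr rfl fun j _ => ?_
          congr 1
          simpa using (biproduct.ι (fun _ : Fin n => 𝟭 C) j).naturality (z.app Y)
      _ = 𝟙 (H.obj Y) ≫ H.map (z.app Y) := by
          rw [h1, Preadditive.sum_comp]; simp [Category.assoc]
      _ = H.map (z.app Y) := by simp
  -- transfer along Υ: the same holds for G = T ⋙ T'
  have key : ∀ X : C, z.app ((T ⋙ T').obj X) = (T ⋙ T').map (z.app X) := by
    intro X
    have h1 : Υ.hom.app X ≫ z.app ((T ⋙ T').obj X) =
        z.app ((⨁ fun _ : Fin n => 𝟭 C).obj X) ≫ Υ.hom.app X := by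
      simpa using z.naturality (Υ.hom.app X)
    have h2 := Υ.hom.naturality (z.app X)
    simp only [Functor.id_obj] at h2
    calc z.app ((T ⋙ T').obj X)
        = Υ.inv.app X ≫ Υ.hom.app X ≫ z.app ((T ⋙ T').obj X) := by simp
      _ = Υ.inv.app X ≫ z.app ((⨁ fun _ : Fin n => 𝟭 C).obj X) ≫ Υ.hom.app X := by rw [h1]
      _ = Υ.inv.app X ≫ (⨁ fun _ : Fin n => 𝟭 C).map (z.app X) ≫ Υ.hom.app X := by rw [hH]
      _ = Υ.inv.app X ≫ Υ.hom.app X ≫ (T ⋙ T').map (z.app X) := by rw [h2]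
      _ = (T ⋙ T').map (z.app X) := by simp
  -- the main computation
  ext X
  have keyX : T'.map (T.map (z.app (T'.obj (T.obj X)))) =
      z.app (T'.obj (T.obj (T'.obj (T.obj X)))) := by
    have h := (key (T'.obj (T.obj X))).symm
    simpa [Functor.comp_obj, Functor.comp_map] using h
  simp only [NatTrans.comp_app, htrT', htrT, Functor.id_obj, Functor.map_comp,
    Functor.map_id, NatTrans.id_app, Category.id_comp, Category.comp_id]
  rw [keyX]
  simp [hz, hz']
end
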